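/- arXiv:2312.13809 — 4 statements merged into one kernel-verified Lean document; each statement's English description precedes it below -/
import Mathlib

section
/- Let n ∈ ℕ and let r = p/q be a rational function where p, q are complex polynomials of degree ≤ n and q ≢ 0. The following are equivalent: (i) r is unitary, i.e. |r(ix)| = 1 for every x ∈ ℝ that is not a pole of r; (ii) r ∈ 𝒰_n, i.e. there exists a complex polynomial w of degree ≤ n, w ≢ 0, such that r = w†/w as rational functions; (iii) there exist θ ∈ ℝ, m ≤ n and s_1,…,s_m ∈ ℂ such that r(z) = (−1)^m e^{iθ} ∏_{j=1}^m (z + conj(s_j))/(z − s_j) for all z ∈ ℂ away from poles. -/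
open Polynomial

noncomputable section

/-- `p†(z) := conj(p)(−z)`: conjugate the coefficients of `p` and substitute `−z`. -/
def pdag (p : Polynomial ℂ) : Polynomial ℂ :=
  (p.map (starRingEnd ℂ)).comp (-Polynomial.X)

/-- `𝒰 n`: the unitary rational functions of degree `(n,n)`, i.e. rational functions
of the form `p†/p` with `p` a nonzero complex polynomial of degree at most `n`. -/
def unitaryClass (n : ℕ) : Set (RatFunc ℂ) :=
  {r | ∃ p : Polynomial ℂ, p ≠ 0 ∧ p.natDegree ≤ n ∧ r = RatFunc.mk (pdag p) p}

/-- Evaluation of a rational function at the imaginary point `i·x`. -/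
def ieval (r : RatFunc ℂ) (x : ℝ) : ℂ :=
  RatFunc.eval (RingHom.id ℂ) (Complex.I * (x : ℂ)) r

/-- The uniform approximation error `‖r − exp(ω·)‖ = sup_{x∈[−1,1]} |r(ix) − e^{iωx}|`. -/
def errNorm (ω : ℝ) (r : RatFunc ℂ) : ℝ :=
  sSup ((fun x : ℝ => ‖ieval r x - Complex.exp (Complex.I * ω * x)‖) ''
    Set.Icc (-1 : ℝ) 1)

/-- The maximal phase error `max_{x∈[−1,1]} |g(x) − ωx|`. -/
def phaseErrSup (ω : ℝ) (g : ℝ → ℝ) : ℝ :=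
  sSup ((fun x : ℝ => |g x - ω * x|) '' Set.Icc (-1 : ℝ) 1)

/-- `g` is a phase function for `r ∈ 𝒰 n`: for some `m ≤ n`, `θ ∈ ℝ` and poles
`s j = ξ j + i μ j` with `ξ j ≠ 0`, `r` has the product representation
`r(z) = (−1)^m e^{iθ} ∏ (z + conj s_j)/(z − s_j)` and
`g(x) = θ + 2 Σ_j arctan((x − μ j)/ξ j)` with `r(ix) = e^{i g(x)}`. -/
def IsPhaseFun (n : ℕ) (r : RatFunc ℂ) (g : ℝ → ℝ) : Prop :=
  ∃ (m : ℕ) (θ : ℝ) (μ ξ : Fin m → ℝ), m ≤ n ∧ (∀ j, ξ j ≠ 0) ∧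
    r = RatFunc.mk
      (Polynomial.C ((-1 : ℂ) ^ m * Complex.exp (θ * Complex.I)) *
        ∏ j, (Polynomial.X + Polynomial.C (starRingEnd ℂ ((ξ j : ℂ) + (μ j : ℂ) * Complex.I))))
      (∏ j, (Polynomial.X - Polynomial.C ((ξ j : ℂ) + (μ j : ℂ) * Complex.I))) ∧
    (∀ x : ℝ, g x = θ + 2 * ∑ j, Real.arctan ((x - μ j) / ξ j)) ∧
    (∀ x : ℝ, ieval r x = Complex.exp (Complex.I * g x))

/-- The phase error of `g` equioscillates between `m` points in `[−1,1]`. -/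
def EquiOsc (ω : ℝ) (g : ℝ → ℝ) (m : ℕ) : Prop :=
  ∃ (η : Fin m → ℝ) (ε : ℝ), StrictMono η ∧ (∀ j, η j ∈ Set.Icc (-1 : ℝ) 1) ∧
    (ε = 1 ∨ ε = -1) ∧
    ∀ j : Fin m, g (η j) - ω * η j = ε * (-1 : ℝ) ^ (j : ℕ) * phaseErrSup ω g

end

/-! On the imaginary axis `p†(ix) = conj (p(ix))`, so `|p/q| = 1` there exactly when the
polynomial identity `p p† = q q†` holds, both sides agreeing at infinitely many points.
Given that identity, a Hilbert 90 argument for the involution `†` shows that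
`w = a q + conj a · p†`, which is nonzero for `a = 1` or `a = i`, satisfies `p w = w† q`,
i.e. `p/q = w†/w`; conversely `p/q = w†/w` gives back `p p† = q q†`. Factoring
`w = c ∏ⱼ (X − sⱼ)` gives `w†/w = (−1)^m (conj c / c) ∏ⱼ (X + conj sⱼ)/(X − sⱼ)`, and `conj c / c`
ranges over the whole unit circle. -/

theorem Multiset.exists_prod_map_eq_prod_fin {α M : Type*} [CommMonoid M] {s : Multiset α}
    {n : ℕ} (hs : Multiset.card s = n) (f : α → M) :
    ∃ v : Fin n → α, (s.map f).prod = ∏ j, f (v j) := by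
  subst hs
  obtain ⟨l, rfl⟩ := Quot.exists_rep s
  exact ⟨l.get, (Fin.prod_univ_fun_getElem l f).symm⟩

theorem Polynomial.exists_eq_C_mul_prod_fin_X_sub_C {k : Type*} [Field k] [IsAlgClosed k]
    (p : k[X]) : ∃ s : Fin p.natDegree → k, p = C p.leadingCoeff * ∏ j, (X - C (s j)) := by
  obtain ⟨s, hs⟩ :=
    Multiset.exists_prod_map_eq_prod_fin IsAlgClosed.card_roots_eq_natDegree fun a : k => X - C a
  exact ⟨s, by rw [← hs, C_leadingCoeff_mul_prod_multiset_X_sub_C IsAlgClosed.card_roots_eq_natDegree]⟩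

section

open Complex ComplexConjugate

noncomputable def pdagHom : ℂ[X] →+* ℂ[X] :=
  (compRingHom (-X)).comp (mapRingHom (starRingEnd ℂ))

theorem pdag_mul (p q : ℂ[X]) : pdag (p * q) = pdag p * pdag q := map_mul pdagHom p q

theorem pdag_add (p q : ℂ[X]) : pdag (p + q) = pdag p + pdag q := map_add pdagHom p q

theorem pdag_prod {ι : Type*} (s : Finset ι) (f : ι → ℂ[X]) :
    pdag (∏ j ∈ s, f j) = ∏ j ∈ s, pdag (f j) :=
  map_prod pdagHom f s

theorem pdag_C (a : ℂ) : pdag (C a) = C (conj a) := by simp [pdag]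

theorem pdag_X_sub_C (s : ℂ) : pdag (X - C s) = -(X + C (conj s)) := by
  simp only [pdag, Polynomial.map_sub, map_X, map_C, sub_comp, X_comp, C_comp]
  ring

theorem pdag_pdag (p : ℂ[X]) : pdag (pdag p) = p := by
  simp [pdag, map_comp, comp_assoc, Polynomial.map_map]

theorem pdag_ne_zero {p : ℂ[X]} (hp : p ≠ 0) : pdag p ≠ 0 := fun h =>
  hp (by rw [← pdag_pdag p, h]; exact map_zero pdagHom)

theorem natDegree_pdag (p : ℂ[X]) : (pdag p).natDegree = p.natDegree := by
  simp [pdag, natDegree_comp]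

theorem eval_pdag_I_mul (p : ℂ[X]) (x : ℝ) :
    (pdag p).eval (I * x) = conj (p.eval (I * x)) := by
  have hneg : -(I * x) = conj (I * x) := by simp
  rw [pdag, eval_comp, eval_neg, eval_X, hneg, eval_map, eval₂_hom]

theorem eval_mul_pdag_I_mul (p : ℂ[X]) (x : ℝ) :
    (p * pdag p).eval (I * x) = (‖p.eval (I * x)‖ : ℂ) ^ 2 := by
  rw [eval_mul, eval_pdag_I_mul, mul_conj']

theorem eq_zero_of_infinite_eval_I_mul_eq_zero {F : ℂ[X]}
    (h : {x : ℝ | F.eval (I * x) = 0}.Infinite) : F = 0 := by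
  have hinj : Function.Injective fun x : ℝ => I * x := fun x y hxy => by
    simpa [I_ne_zero] using hxy
  refine eq_zero_of_infinite_isRoot F ((h.image hinj.injOn).mono ?_)
  rintro _ ⟨x, hx, rfl⟩
  exact hx

theorem eq_of_eval_I_mul_eq {F G q : ℂ[X]} (hq : q ≠ 0)
    (h : ∀ x : ℝ, q.eval (I * x) ≠ 0 → F.eval (I * x) = G.eval (I * x)) : F = G := by
  have hq_fin : {x : ℝ | q.eval (I * x) = 0}.Finite := by
    by_contra hinf
    exact hq (eq_zero_of_infinite_eval_I_mul_eq_zero hinf)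
  refine sub_eq_zero.1 (eq_zero_of_infinite_eval_I_mul_eq_zero (hq_fin.infinite_compl.mono ?_))
  intro x hx
  simp [h x hx]

theorem norm_eval_div_eq_one_iff_mul_pdag_eq {p q : ℂ[X]} (hq : q ≠ 0) :
    (∀ x : ℝ, q.eval (I * x) ≠ 0 → ‖p.eval (I * x) / q.eval (I * x)‖ = 1) ↔
      p * pdag p = q * pdag q := by
  have key : ∀ x : ℝ, q.eval (I * x) ≠ 0 → (‖p.eval (I * x) / q.eval (I * x)‖ = 1 ↔
      (p * pdag p).eval (I * x) = (q * pdag q).eval (I * x)) := by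
    intro x hx
    rw [eval_mul_pdag_I_mul, eval_mul_pdag_I_mul, norm_div, div_eq_one_iff_eq (norm_ne_zero_iff.2 hx),
      ← ofReal_pow, ← ofReal_pow, ofReal_inj, sq_eq_sq₀ (norm_nonneg _) (norm_nonneg _)]
  refine ⟨fun h => eq_of_eval_I_mul_eq hq fun x hx => (key x hx).1 (h x hx),
    fun h x hx => (key x hx).2 (by rw [h])⟩

theorem mul_eq_pdag_mul_of_mul_pdag_eq {p q : ℂ[X]} (h : p * pdag p = q * pdag q) (a : ℂ) :
    p * (C a * q + C (conj a) * pdag p) = pdag (C a * q + C (conj a) * pdag p) * q := by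
  rw [pdag_add, pdag_mul, pdag_mul, pdag_C, pdag_C, pdag_pdag, conj_conj]
  linear_combination C (conj a) * h

theorem exists_C_mul_add_C_conj_mul_pdag_ne_zero (p : ℂ[X]) {q : ℂ[X]} (hq : q ≠ 0) :
    ∃ a : ℂ, C a * q + C (conj a) * pdag p ≠ 0 := by
  by_contra! h
  have h1 := h 1
  have hI := h I
  simp only [map_one, one_mul, conj_I, map_neg, neg_mul] at h1 hI
  have : C I * (q + q) = 0 := by linear_combination C I * h1 + hI
  simp [I_ne_zero, hq] at this

theorem exists_mul_eq_pdag_mul_of_mul_pdag_eq {p q : ℂ[X]} (hq : q ≠ 0)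
    (h : p * pdag p = q * pdag q) :
    ∃ w : ℂ[X], w ≠ 0 ∧ w.natDegree ≤ max p.natDegree q.natDegree ∧ p * w = pdag w * q := by
  obtain ⟨a, ha⟩ := exists_C_mul_add_C_conj_mul_pdag_ne_zero p hq
  refine ⟨_, ha, ?_, mul_eq_pdag_mul_of_mul_pdag_eq h a⟩
  refine (natDegree_add_le _ _).trans (max_le ?_ ?_)
  · exact (natDegree_C_mul_le _ _).trans (le_max_right _ _)
  · exact (natDegree_C_mul_le _ _).trans ((natDegree_pdag p).trans_le (le_max_left _ _))

theorem mul_pdag_eq_of_mul_eq_pdag_mul {p q w : ℂ[X]} (hw : w ≠ 0) (h : p * w = pdag w * q) :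
    p * pdag p = q * pdag q := by
  have h' : pdag p * pdag w = w * pdag q := by
    simpa only [pdag_mul, pdag_pdag] using congrArg pdag h
  refine mul_right_cancel₀ (mul_ne_zero hw (pdag_ne_zero hw)) ?_
  linear_combination (pdag p * pdag w) * h + (pdag w * q) * h'

noncomputable def unitaryProd {m : ℕ} (θ : ℝ) (s : Fin m → ℂ) : RatFunc ℂ :=
  RatFunc.mk (C ((-1 : ℂ) ^ m * exp (θ * I)) * ∏ j, (X + C (conj (s j))))
    (∏ j, (X - C (s j)))

theorem pdag_prod_X_sub_C {m : ℕ} (s : Fin m → ℂ) :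
    pdag (∏ j, (X - C (s j))) = C ((-1 : ℂ) ^ m) * ∏ j, (X + C (conj (s j))) := by
  rw [pdag_prod]
  simp only [pdag_X_sub_C, Finset.prod_neg, Finset.card_univ, Fintype.card_fin, map_pow, map_neg,
    map_one]

theorem mk_pdag_C_mul_prod_X_sub_C {m : ℕ} {u : ℂ} (hu : u ≠ 0) (s : Fin m → ℂ) {θ : ℝ}
    (hθ : exp (θ * I) = conj u / u) :
    RatFunc.mk (pdag (C u * ∏ j, (X - C (s j)))) (C u * ∏ j, (X - C (s j))) =
      unitaryProd θ s := by
  have hP := (monic_prod_X_sub_C s Finset.univ).ne_zero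
  rw [unitaryProd, RatFunc.mk_eq_mk (mul_ne_zero (C_ne_zero.2 hu) hP) hP, pdag_mul, pdag_C,
    pdag_prod_X_sub_C, hθ]
  have hc : C ((-1) ^ m * (conj u / u)) * C u = C (conj u) * C ((-1 : ℂ) ^ m) := by
    rw [← C_mul, ← C_mul]
    field_simp
  linear_combination (-(∏ j, (X + C (conj (s j)))) * ∏ j, (X - C (s j))) * hc

theorem exists_mk_pdag_eq_unitaryProd {w : ℂ[X]} (hw : w ≠ 0) :
    ∃ (θ : ℝ) (s : Fin w.natDegree → ℂ), RatFunc.mk (pdag w) w = unitaryProd θ s := by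
  obtain ⟨s, hs⟩ := w.exists_eq_C_mul_prod_fin_X_sub_C
  have hc : w.leadingCoeff ≠ 0 := leadingCoeff_ne_zero.2 hw
  have hnorm : ‖conj w.leadingCoeff / w.leadingCoeff‖ = 1 := by
    rw [norm_div, norm_conj, div_self (norm_ne_zero_iff.2 hc)]
  obtain ⟨θ, hθ⟩ := (norm_eq_one_iff _).1 hnorm
  refine ⟨θ, s, ?_⟩
  rw [← mk_pdag_C_mul_prod_X_sub_C hc s hθ, ← hs]

theorem exists_unitaryProd_eq_mk_pdag {m : ℕ} (θ : ℝ) (s : Fin m → ℂ) :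
    ∃ w : ℂ[X], w ≠ 0 ∧ w.natDegree = m ∧ unitaryProd θ s = RatFunc.mk (pdag w) w := by
  set u := exp (-((θ / 2 : ℝ) : ℂ) * I)
  have hu : u ≠ 0 := exp_ne_zero _
  have hθ : exp (θ * I) = conj u / u := by
    rw [← exp_conj, ← exp_sub]
    congr 1
    simp only [map_mul, map_neg, conj_ofReal, conj_I]
    push_cast
    ring
  have hP := (monic_prod_X_sub_C s Finset.univ).ne_zero
  refine ⟨C u * ∏ j, (X - C (s j)), mul_ne_zero (C_ne_zero.2 hu) hP, ?_,
    (mk_pdag_C_mul_prod_X_sub_C hu s hθ).symm⟩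
  simp [natDegree_C_mul hu]

end

/-- For `r = p/q` with `p, q` of degree ≤ n and `q ≠ 0`, the following are
equivalent: (i) `|r(ix)| = 1` for all real `x` that are not poles; (ii) `r = w†/w` for some
nonzero `w` of degree ≤ n; (iii) `r(z) = (−1)^m e^{iθ} ∏_{j=1}^m (z + conj s_j)/(z − s_j)`
for some `θ ∈ ℝ`, `m ≤ n`, `s_1, …, s_m ∈ ℂ`. -/
theorem unitary_rational_characterization (n : ℕ) (p q : Polynomial ℂ)
    (hp : p.natDegree ≤ n) (hq : q.natDegree ≤ n) (hq0 : q ≠ 0) :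
    ((∀ x : ℝ, q.eval (Complex.I * (x : ℂ)) ≠ 0 →
        ‖p.eval (Complex.I * (x : ℂ)) / q.eval (Complex.I * (x : ℂ))‖ = 1) ↔
      (∃ w : Polynomial ℂ, w ≠ 0 ∧ w.natDegree ≤ n ∧
        RatFunc.mk p q = RatFunc.mk (pdag w) w)) ∧
    ((∃ w : Polynomial ℂ, w ≠ 0 ∧ w.natDegree ≤ n ∧
        RatFunc.mk p q = RatFunc.mk (pdag w) w) ↔
      (∃ (m : ℕ) (θ : ℝ) (s : Fin m → ℂ), m ≤ n ∧
        RatFunc.mk p q = RatFunc.mk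
          (Polynomial.C ((-1 : ℂ) ^ m * Complex.exp (θ * Complex.I)) *
            ∏ j, (Polynomial.X + Polynomial.C (starRingEnd ℂ (s j))))
          (∏ j, (Polynomial.X - Polynomial.C (s j))))) := by
  refine ⟨?_, ?_, ?_⟩
  · rw [norm_eval_div_eq_one_iff_mul_pdag_eq hq0]
    constructor
    · intro h
      obtain ⟨w, hw, hwn, hwpq⟩ := exists_mul_eq_pdag_mul_of_mul_pdag_eq hq0 h
      exact ⟨w, hw, hwn.trans (max_le hp hq), (RatFunc.mk_eq_mk hq0 hw).2 hwpq⟩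
    · rintro ⟨w, hw, -, hpq⟩
      exact mul_pdag_eq_of_mul_eq_pdag_mul hw ((RatFunc.mk_eq_mk hq0 hw).1 hpq)
  · rintro ⟨w, hw, hwn, hpq⟩
    obtain ⟨θ, s, hws⟩ := exists_mk_pdag_eq_unitaryProd hw
    exact ⟨w.natDegree, θ, s, hwn, hpq.trans hws⟩
  · rintro ⟨m, θ, s, hmn, hpq⟩
    obtain ⟨w, hw, hwm, hsw⟩ := exists_unitaryProd_eq_mk_pdag θ s
    exact ⟨w, hw, hwm.trans_le hmn, hpq.trans hsw⟩
end

section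
/- Let n ∈ ℕ and ω > 0. (iii) Let r_1, r_2 ∈ 𝒰_n have phase functions g_1, g_2 satisfying max_{x ∈ [−1,1]} |g_k(x) − ωx| < π for k = 1, 2 (equivalently, ‖r_k − exp(ω·)‖ < 2). Then ‖r_2 − exp(ω·)‖ < ‖r_1 − exp(ω·)‖ if and only if max_{x ∈ [−1,1]} |g_2(x) − ωx| < max_{x ∈ [−1,1]} |g_1(x) − ωx|. (iv) If r ∈ 𝒰_n has phase function g with max_{x ∈ [−1,1]} |g(x) − ωx| < π, then a point y ∈ [−1,1] satisfies |r(iy) − e^{iωy}| = ‖r − exp(ω·)‖ if and only if |g(y) − ωy| = max_{x ∈ [−1,1]} |g(x) − ωx|. -/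
open Polynomial

/-!
On the unit circle `|e^{ia} - e^{ib}| = 2 |sin ((a - b) / 2)|`, so where `r(ix) = e^{i g(x)}` the
pointwise approximation error is `2 sin (|g(x) - ωx| / 2)` as long as the phase error is at
most `π`. Since `t ↦ 2 sin (t / 2)` is strictly increasing on `[0, π]`, it maps the maximal phase
error to the maximal approximation error, preserves the order of these maxima, and the points
where they are attained coincide.
-/

open Set Real

theorem norm_exp_I_mul_sub_exp_I_mul (a b : ℝ) :
    ‖Complex.exp (Complex.I * a) - Complex.exp (Complex.I * b)‖ = 2 * |sin ((a - b) / 2)| := by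
  have hfactor : Complex.exp (Complex.I * a) - Complex.exp (Complex.I * b)
      = Complex.exp (Complex.I * b) * (Complex.exp (Complex.I * (a - b : ℝ)) - 1) := by
    rw [mul_sub, ← Complex.exp_add]
    push_cast
    ring_nf
  rw [hfactor, norm_mul, mul_comm Complex.I, Complex.norm_exp_ofReal_mul_I, one_mul,
    Complex.norm_exp_I_mul_ofReal_sub_one, norm_mul, Real.norm_two, Real.norm_eq_abs]

theorem norm_exp_I_mul_sub_exp_I_mul_of_abs_le {a b : ℝ} (h : |a - b| ≤ 2 * π) :
    ‖Complex.exp (Complex.I * a) - Complex.exp (Complex.I * b)‖ = 2 * sin (|a - b| / 2) := by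
  have hhalf : |(a - b) / 2| ≤ π := by rw [abs_div, abs_two]; linarith
  rw [norm_exp_I_mul_sub_exp_I_mul, abs_sin_eq_sin_abs_of_abs_le_pi hhalf, abs_div, abs_two]

theorem strictMonoOn_two_mul_sin_half : StrictMonoOn (fun t => 2 * sin (t / 2)) (Icc 0 π) := by
  intro s hs t ht hst
  have hmem : ∀ u ∈ Icc 0 π, u / 2 ∈ Icc (-(π / 2)) (π / 2) := fun u hu =>
    ⟨by linarith [hu.1, pi_pos], by linarith [hu.2]⟩
  have := strictMonoOn_sin (hmem s hs) (hmem t ht) (by linarith)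
  dsimp only
  linarith

section PhaseError

variable {n : ℕ} {ω : ℝ} {g : ℝ → ℝ} {r : RatFunc ℂ}

theorem isGreatest_phaseErrSup (hg : Continuous g) :
    IsGreatest ((fun x => |g x - ω * x|) '' Icc (-1) 1) (phaseErrSup ω g) :=
  (isCompact_Icc.image (by fun_prop)).isGreatest_sSup ((nonempty_Icc.2 (by norm_num)).image _)

theorem abs_sub_le_phaseErrSup (hg : Continuous g) {x : ℝ} (hx : x ∈ Icc (-1) 1) :
    |g x - ω * x| ≤ phaseErrSup ω g :=
  (isGreatest_phaseErrSup hg).2 ⟨x, hx, rfl⟩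

theorem phaseErrSup_nonneg (hg : Continuous g) : 0 ≤ phaseErrSup ω g :=
  (abs_nonneg _).trans (abs_sub_le_phaseErrSup hg (x := 0) (by norm_num))

theorem norm_ieval_sub_exp (hr : ∀ x : ℝ, ieval r x = Complex.exp (Complex.I * g x)) {x : ℝ}
    (hx : |g x - ω * x| ≤ 2 * π) :
    ‖ieval r x - Complex.exp (Complex.I * ω * x)‖ = 2 * sin (|g x - ω * x| / 2) := by
  rw [hr, mul_assoc, ← Complex.ofReal_mul, norm_exp_I_mul_sub_exp_I_mul_of_abs_le hx]

theorem errNorm_eq (hg : Continuous g) (hr : ∀ x : ℝ, ieval r x = Complex.exp (Complex.I * g x))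
    (hb : phaseErrSup ω g ≤ π) : errNorm ω r = 2 * sin (phaseErrSup ω g / 2) := by
  have hle : ∀ x ∈ Icc (-1 : ℝ) 1, |g x - ω * x| ≤ π := fun x hx =>
    (abs_sub_le_phaseErrSup hg hx).trans hb
  have hsub : (fun x => |g x - ω * x|) '' Icc (-1) 1 ⊆ Icc 0 π := by
    rintro _ ⟨x, hx, rfl⟩
    exact ⟨abs_nonneg _, hle x hx⟩
  have hgreatest := (strictMonoOn_two_mul_sin_half.monotoneOn.mono hsub).map_isGreatest
    (isGreatest_phaseErrSup hg)
  rw [image_image] at hgreatest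
  rw [errNorm, image_congr fun x hx => norm_ieval_sub_exp hr ((hle x hx).trans (by linarith [pi_pos]))]
  exact hgreatest.csSup_eq

theorem IsPhaseFun.continuous (h : IsPhaseFun n r g) : Continuous g := by
  obtain ⟨m, θ, μ, ξ, -, -, -, hg, -⟩ := h
  rw [funext hg]
  fun_prop

theorem IsPhaseFun.ieval_eq (h : IsPhaseFun n r g) (x : ℝ) :
    ieval r x = Complex.exp (Complex.I * g x) := by
  obtain ⟨m, θ, μ, ξ, -, -, -, -, hr⟩ := h
  exact hr x

end PhaseError

theorem phase_error_vs_approx_error_general (n : ℕ) (ω : ℝ)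
    (r₁ r₂ : RatFunc ℂ)
    (g₁ g₂ : ℝ → ℝ) (hg₁ : IsPhaseFun n r₁ g₁) (hg₂ : IsPhaseFun n r₂ g₂)
    (hb₁ : phaseErrSup ω g₁ < Real.pi) (hb₂ : phaseErrSup ω g₂ < Real.pi) :
    (errNorm ω r₂ < errNorm ω r₁ ↔ phaseErrSup ω g₂ < phaseErrSup ω g₁) ∧
    (∀ y ∈ Set.Icc (-1 : ℝ) 1,
      (‖ieval r₁ y - Complex.exp (Complex.I * ω * y)‖ = errNorm ω r₁ ↔
        |g₁ y - ω * y| = phaseErrSup ω g₁)) := by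
  have hmem₁ : phaseErrSup ω g₁ ∈ Icc 0 π := ⟨phaseErrSup_nonneg hg₁.continuous, hb₁.le⟩
  have hmem₂ : phaseErrSup ω g₂ ∈ Icc 0 π := ⟨phaseErrSup_nonneg hg₂.continuous, hb₂.le⟩
  rw [errNorm_eq hg₁.continuous hg₁.ieval_eq hb₁.le, errNorm_eq hg₂.continuous hg₂.ieval_eq hb₂.le]
  refine ⟨strictMonoOn_two_mul_sin_half.lt_iff_lt hmem₂ hmem₁, fun y hy => ?_⟩
  have hmem : |g₁ y - ω * y| ∈ Icc 0 π :=
    ⟨abs_nonneg _, (abs_sub_le_phaseErrSup hg₁.continuous hy).trans hb₁.le⟩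
  rw [norm_ieval_sub_exp hg₁.ieval_eq (hmem.2.trans (by linarith [pi_pos]))]
  exact strictMonoOn_two_mul_sin_half.injOn.eq_iff hmem hmem₁

/-- (iii) For `r₁, r₂ ∈ 𝒰_n` with phase functions `g₁, g₂` whose phase errors
are bounded by `π` on `[−1,1]`, one has `‖r₂ − exp(ω·)‖ < ‖r₁ − exp(ω·)‖` iff
`max |g₂ − ωx| < max |g₁ − ωx|`. (iv) For such `r₁` with phase function `g₁`, a point
`y ∈ [−1,1]` attains the maximal approximation error iff it attains the maximal phase
error. -/
theorem phase_error_vs_approx_error (n : ℕ) (ω : ℝ) (hω : 0 < ω)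
    (r₁ r₂ : RatFunc ℂ) (h₁ : r₁ ∈ unitaryClass n) (h₂ : r₂ ∈ unitaryClass n)
    (g₁ g₂ : ℝ → ℝ) (hg₁ : IsPhaseFun n r₁ g₁) (hg₂ : IsPhaseFun n r₂ g₂)
    (hb₁ : phaseErrSup ω g₁ < Real.pi) (hb₂ : phaseErrSup ω g₂ < Real.pi) :
    (errNorm ω r₂ < errNorm ω r₁ ↔ phaseErrSup ω g₂ < phaseErrSup ω g₁) ∧
    (∀ y ∈ Set.Icc (-1 : ℝ) 1,
      (‖ieval r₁ y - Complex.exp (Complex.I * ω * y)‖ = errNorm ω r₁ ↔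
        |g₁ y - ω * y| = phaseErrSup ω g₁)) :=
  phase_error_vs_approx_error_general n ω r₁ r₂ g₁ g₂ hg₁ hg₂ hb₁ hb₂
end

section
/- Let r_1, r_2 ∈ 𝒰_n have minimal degrees n_1 and n_2 respectively, and let g_1, g_2 be phase functions with r_1(ix) = e^{i g_1(x)} and r_2(ix) = e^{i g_2(x)} for all x ∈ ℝ. If g_1 − g_2 has at least n_1 + n_2 + 1 zeros counting multiplicity — i.e. there exist distinct points y_1,…,y_ℓ ∈ ℝ and multiplicities k_1,…,k_ℓ ≥ 1 with k_1 + ⋯ + k_ℓ ≥ n_1 + n_2 + 1 such that the d-th derivative of g_1 − g_2 vanishes at y_i for every 0 ≤ d < k_i and every i — then r_1 = r_2. -/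
open Polynomial

/-!
Write `r_j = p_j†/p_j` with `deg p_j ≤ n_j`. On the imaginary axis the polynomial
`P = p₁† p₂ - p₂† p₁` satisfies `P(ix) = (r₁(ix) - r₂(ix)) p₁(ix) p₂(ix)`, first away from the
finitely many poles and then everywhere by continuity, where
`r₁(ix) - r₂(ix) = (e^{i (g₁ - g₂)(x)} - 1) e^{i g₂(x)}`. A zero of order `k` of `g₁ - g₂` is
therefore a zero of order at least `k` of `x ↦ P(ix)`, a polynomial of degree at most `n₁ + n₂`.
Having at least `n₁ + n₂ + 1` zeros, it vanishes identically, so `p₁† p₂ = p₂† p₁`, i.e. `r₁ = r₂`.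
-/

open Complex
open scoped ContDiff

section VanishingOrder

variable {𝕜 F : Type*} [NontriviallyNormedField 𝕜] [NormedAddCommGroup F] [NormedSpace 𝕜 F]

def VanishesToOrder (f : 𝕜 → F) (y : 𝕜) (K : ℕ) : Prop :=
  ∀ d < K, iteratedDeriv d f y = 0

theorem ContinuousLinearMap.iteratedDeriv_comp_left {G : Type*} [NormedAddCommGroup G]
    [NormedSpace 𝕜 G] (L : F →L[𝕜] G) {f : 𝕜 → F} (hf : ContDiff 𝕜 ∞ f) (d : ℕ) (y : 𝕜) :
    iteratedDeriv d (L ∘ f) y = L (iteratedDeriv d f y) := by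
  simp only [iteratedDeriv_eq_iteratedFDeriv,
    L.iteratedFDeriv_comp_left hf.contDiffAt (mod_cast le_top : (d : WithTop ℕ∞) ≤ ∞)]
  rfl

variable {f : 𝕜 → F} {y : 𝕜} {K : ℕ}

theorem VanishesToOrder.comp_left {G : Type*} [NormedAddCommGroup G] [NormedSpace 𝕜 G]
    (hf : VanishesToOrder f y K) (hf' : ContDiff 𝕜 ∞ f) (L : F →L[𝕜] G) :
    VanishesToOrder (L ∘ f) y K := fun d hd => by
  rw [L.iteratedDeriv_comp_left hf' d y, hf d hd, map_zero]

variable {𝔸 : Type*} [NormedRing 𝔸] [NormedAlgebra 𝕜 𝔸] {u v : 𝕜 → 𝔸}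

theorem VanishesToOrder.const_mul (hu : VanishesToOrder u y K) (hu' : ContDiff 𝕜 ∞ u) (c : 𝔸) :
    VanishesToOrder (fun x => c * u x) y K := fun d hd => by
  rw [iteratedDeriv_const_mul c (hu'.contDiffAt.of_le (mod_cast le_top)), hu d hd, mul_zero]

theorem VanishesToOrder.mul (hu : VanishesToOrder u y K) (hu' : ContDiff 𝕜 ∞ u)
    (hv' : ContDiff 𝕜 ∞ v) : VanishesToOrder (fun x => u x * v x) y K := fun d hd => by
  rw [iteratedDeriv_fun_mul (hu'.contDiffAt.of_le (mod_cast le_top))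
    (hv'.contDiffAt.of_le (mod_cast le_top))]
  refine Finset.sum_eq_zero fun i hi => ?_
  rw [hu i (by grind), mul_zero, zero_mul]

end VanishingOrder

section ComplexExp

variable {𝕜 : Type*} [NontriviallyNormedField 𝕜] [NormedAlgebra 𝕜 ℂ]

theorem VanishesToOrder.cexp_sub_one {h : 𝕜 → ℂ} {y : 𝕜} {K : ℕ} (hh : VanishesToOrder h y K)
    (hh' : ContDiff 𝕜 ∞ h) : VanishesToOrder (fun x => cexp (h x) - 1) y K := by
  intro d
  induction d using Nat.strong_induction_on with
  | _ d ih =>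
  intro hd
  cases d with
  | zero => simp [show h y = 0 from hh 0 hd]
  | succ d =>
    have hdh : ContDiff 𝕜 ∞ (deriv h) := (contDiff_infty_iff_deriv.mp hh').2
    have hE : ContDiff 𝕜 ∞ (fun x => cexp (h x) - 1) :=
      (contDiff_exp.comp hh').sub contDiff_const
    -- Both summands of `(e^h - 1)'` vanish to order `d`, the first by the induction hypothesis.
    have hderiv : deriv (fun x => cexp (h x) - 1) =
        fun x => (cexp (h x) - 1) * deriv h x + deriv h x := by
      funext x
      rw [(((hh'.differentiable (by simp)) x).hasDerivAt.cexp.sub_const 1).deriv]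
      ring
    have hprod : VanishesToOrder (fun x => (cexp (h x) - 1) * deriv h x) y (d + 1) :=
      VanishesToOrder.mul (fun j hj => ih j hj (by omega)) hE hdh
    rw [iteratedDeriv_succ', hderiv, iteratedDeriv_fun_add
      ((hE.mul hdh).contDiffAt.of_le (mod_cast le_top)) (hdh.contDiffAt.of_le (mod_cast le_top)),
      hprod d d.lt_succ_self, ← iteratedDeriv_succ', hh (d + 1) hd, add_zero]

end ComplexExp

theorem Polynomial.sum_le_natDegree_of_le_rootMultiplicity {R ι : Type*} [CommRing R]
    [IsDomain R] [Fintype ι] {p : R[X]} {y : ι → R} (hy : Function.Injective y) {k : ι → ℕ}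
    (hk : ∀ i, k i ≤ p.rootMultiplicity (y i)) : ∑ i, k i ≤ p.natDegree := by
  classical
  calc ∑ i, k i ≤ ∑ i, p.roots.count (y i) :=
        Finset.sum_le_sum fun i _ => (count_roots p).ge.trans' (hk i)
    _ = ∑ a ∈ Finset.univ.image y, p.roots.count a := by
      rw [Finset.sum_image fun i _ j _ h => hy h]
    _ ≤ ∑ a ∈ Finset.univ.image y ∪ p.roots.toFinset, p.roots.count a :=
      Finset.sum_le_sum_of_subset Finset.subset_union_left
    _ = Multiset.card p.roots := Multiset.sum_count_eq_card fun a ha => by simp [ha]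
    _ ≤ p.natDegree := card_roots' p

theorem Polynomial.iteratedDeriv_eval_ofReal (Q : ℂ[X]) (d : ℕ) (y : ℝ) :
    iteratedDeriv d (fun t : ℝ => Q.eval (t : ℂ)) y = (derivative^[d] Q).eval (y : ℂ) := by
  induction d generalizing Q with
  | zero => simp
  | succ d ih =>
    have hderiv : deriv (fun t : ℝ => Q.eval (t : ℂ)) =
        fun t : ℝ => (derivative Q).eval (t : ℂ) := by
      funext t
      exact (Q.hasDerivAt (t : ℂ)).comp_ofReal.deriv
    rw [iteratedDeriv_succ', hderiv, ih, Function.iterate_succ_apply]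

theorem Polynomial.le_rootMultiplicity_of_vanishesToOrder {Q : ℂ[X]} (hQ : Q ≠ 0) {y : ℝ}
    {K : ℕ} (h : VanishesToOrder (fun t : ℝ => Q.eval (t : ℂ)) y K) :
    K ≤ Q.rootMultiplicity (y : ℂ) := by
  rcases K with _ | K
  · exact Nat.zero_le _
  · refine lt_rootMultiplicity_of_isRoot_iterate_derivative hQ fun m hm => ?_
    rw [IsRoot, ← iteratedDeriv_eval_ofReal]
    exact h m (Nat.lt_succ_of_le hm)

theorem Polynomial.eq_zero_of_vanishesToOrder {ι : Type*} [Fintype ι] {Q : ℂ[X]} {y : ι → ℝ}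
    (hy : Function.Injective y) {k : ι → ℕ}
    (hQ : ∀ i, VanishesToOrder (fun t : ℝ => Q.eval (t : ℂ)) (y i) (k i))
    (hdeg : Q.natDegree < ∑ i, k i) : Q = 0 := by
  by_contra hQ0
  exact hdeg.not_ge <| sum_le_natDegree_of_le_rootMultiplicity
    (ofReal_injective.comp hy) fun i => le_rootMultiplicity_of_vanishesToOrder hQ0 (hQ i)

theorem RatFunc.eval_mk {K : Type*} [Field K] {p q : K[X]} (hq : q ≠ 0) {z : K}
    (hz : q.eval z ≠ 0) :
    RatFunc.eval (RingHom.id K) z (RatFunc.mk p q) = p.eval z / q.eval z := by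
  have hden : eval₂ (RingHom.id K) z (RatFunc.mk p q).denom ≠ 0 := by
    obtain ⟨c, hc⟩ := (RatFunc.denom_dvd hq).mpr ⟨p, RatFunc.mk_eq_div p q⟩
    rw [eval₂_id]
    intro h0
    exact hz (by rw [hc, Polynomial.eval_mul, h0, zero_mul])
  have hmul := RatFunc.eval_mul (f := RingHom.id K) (a := z) hden
    (y := algebraMap K[X] (RatFunc K) q) (by simp)
  rw [RatFunc.mk_eq_div, div_mul_cancel₀ _ (RatFunc.algebraMap_ne_zero hq),
    RatFunc.eval_algebraMap, RatFunc.eval_algebraMap, ← RatFunc.mk_eq_div] at hmul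
  rw [eq_div_iff hz]
  simpa [eval₂_id] using hmul.symm

theorem IsPhaseFun.contDiff {n : ℕ} {r : RatFunc ℂ} {g : ℝ → ℝ} (hg : IsPhaseFun n r g) :
    ContDiff ℝ ∞ g := by
  obtain ⟨m, θ, μ, ξ, -, -, -, hform, -⟩ := hg
  rw [funext hform]
  exact contDiff_const.add <| contDiff_const.mul <| ContDiff.sum fun j _ =>
    ((contDiff_id.sub contDiff_const).div_const _).arctan

@[fun_prop]
theorem ContDiff.ofReal {g : ℝ → ℝ} {n : WithTop ℕ∞} (hg : ContDiff ℝ n g) :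
    ContDiff ℝ n (fun x => (g x : ℂ)) :=
  ofRealCLM.contDiff.comp hg

theorem Polynomial.contDiff_eval_ofReal (Q : ℂ[X]) :
    ContDiff ℝ ∞ (fun t : ℝ => Q.eval (t : ℂ)) := by
  simpa [Function.comp_def] using
    ((Q.contDiff_aeval (𝕜 := ℂ) ∞).restrict_scalars ℝ).comp ofRealCLM.contDiff

theorem VanishesToOrder.cexp_I_mul_sub {g₁ g₂ : ℝ → ℝ} {y : ℝ} {K : ℕ}
    (h : VanishesToOrder (fun t => g₁ t - g₂ t) y K) (hg₁ : ContDiff ℝ ∞ g₁)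
    (hg₂ : ContDiff ℝ ∞ g₂) :
    VanishesToOrder (fun x => cexp (I * g₁ x) - cexp (I * g₂ x)) y K := by
  have hg : ContDiff ℝ ∞ (fun t => ((g₁ t - g₂ t : ℝ) : ℂ)) := by fun_prop
  have hφ : VanishesToOrder (fun t => I * ((g₁ t - g₂ t : ℝ) : ℂ)) y K :=
    (h.comp_left (hg₁.sub hg₂) ofRealCLM).const_mul hg I
  have hfactor : (fun x => cexp (I * g₁ x) - cexp (I * g₂ x)) =
      fun x => (cexp (I * ((g₁ x - g₂ x : ℝ) : ℂ)) - 1) * cexp (I * g₂ x) := by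
    funext x
    rw [sub_mul, one_mul, ← exp_add]
    push_cast
    ring_nf
  rw [hfactor]
  exact (hφ.cexp_sub_one (by fun_prop)).mul (by fun_prop) (by fun_prop)

theorem Polynomial.eval_ofReal_eq_mul_of_ne_zero {P B : ℂ[X]} (hB : B ≠ 0) {u : ℝ → ℂ}
    (hu : Continuous u)
    (h : ∀ x : ℝ, B.eval (x : ℂ) ≠ 0 → P.eval (x : ℂ) = u x * B.eval (x : ℂ)) (x : ℝ) :
    P.eval (x : ℂ) = u x * B.eval (x : ℂ) := by
  have hfin : {x : ℝ | B.eval (x : ℂ) = 0}.Finite :=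
    (B.finite_setOfPred_isRoot hB).preimage ofReal_injective.injOn
  refine congrFun (Continuous.ext_on (hfin.countable.dense_compl ℝ) ?_ ?_ h) x <;> fun_prop

theorem natDegree_pdag_le (p : ℂ[X]) : (pdag p).natDegree ≤ p.natDegree :=
  natDegree_comp_le.trans (by simp)

theorem eval_cross_comp_eq_mul {p₁ p₂ : ℂ[X]} (hp₁ : p₁ ≠ 0) (hp₂ : p₂ ≠ 0) {g₁ g₂ : ℝ → ℝ}
    (hc₁ : Continuous g₁) (hc₂ : Continuous g₂)
    (h₁ : ∀ x, ieval (RatFunc.mk (pdag p₁) p₁) x = cexp (I * g₁ x))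
    (h₂ : ∀ x, ieval (RatFunc.mk (pdag p₂) p₂) x = cexp (I * g₂ x)) (x : ℝ) :
    ((pdag p₁ * p₂ - pdag p₂ * p₁).comp (C I * X)).eval (x : ℂ) =
      (cexp (I * g₁ x) - cexp (I * g₂ x)) * ((p₁ * p₂).comp (C I * X)).eval (x : ℂ) := by
  refine eval_ofReal_eq_mul_of_ne_zero ?_ (u := fun x => cexp (I * g₁ x) - cexp (I * g₂ x))
    (by fun_prop) (fun x hx => ?_) x
  · rw [Ne, comp_C_mul_X_eq_zero_iff (mem_nonZeroDivisors_of_ne_zero I_ne_zero)]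
    exact mul_ne_zero hp₁ hp₂
  simp only [eval_comp, eval_mul, eval_sub, eval_C, eval_X] at hx ⊢
  have hx₁ : p₁.eval (I * x) ≠ 0 := left_ne_zero_of_mul hx
  have hx₂ : p₂.eval (I * x) ≠ 0 := right_ne_zero_of_mul hx
  rw [← h₁, ← h₂, ieval, ieval, RatFunc.eval_mk hp₁ hx₁, RatFunc.eval_mk hp₂ hx₂]
  field_simp

theorem phase_difference_zeros_imply_eq_general (n n₁ n₂ : ℕ) (r₁ r₂ : RatFunc ℂ)
    (h₁ : r₁ ∈ unitaryClass n₁)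
    (h₂ : r₂ ∈ unitaryClass n₂)
    (g₁ g₂ : ℝ → ℝ) (hg₁ : IsPhaseFun n r₁ g₁) (hg₂ : IsPhaseFun n r₂ g₂)
    (l : ℕ) (y : Fin l → ℝ) (k : Fin l → ℕ)
    (hy : Function.Injective y)
    (hsum : n₁ + n₂ + 1 ≤ ∑ i, k i)
    (hzero : ∀ i : Fin l, ∀ d : ℕ, d < k i →
      iteratedDeriv d (fun t => g₁ t - g₂ t) (y i) = 0) :
    r₁ = r₂ := by
  obtain ⟨p₁, hp₁, hdeg₁, rfl⟩ := h₁
  obtain ⟨p₂, hp₂, hdeg₂, rfl⟩ := h₂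
  have hs₁ := hg₁.contDiff
  have hs₂ := hg₂.contDiff
  obtain ⟨-, -, -, -, -, -, -, -, hr₁⟩ := hg₁
  obtain ⟨-, -, -, -, -, -, -, -, hr₂⟩ := hg₂
  set P := pdag p₁ * p₂ - pdag p₂ * p₁
  have hcross := eval_cross_comp_eq_mul hp₁ hp₂ hs₁.continuous hs₂.continuous hr₁ hr₂
  have hvanish (i : Fin l) :
      VanishesToOrder (fun t : ℝ => (P.comp (C I * X)).eval (t : ℂ)) (y i) (k i) := by
    rw [funext hcross]
    exact (VanishesToOrder.cexp_I_mul_sub (hzero i) hs₁ hs₂).mul (by fun_prop)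
      (contDiff_eval_ofReal _)
  have hdeg : (P.comp (C I * X)).natDegree < ∑ i, k i := by
    calc (P.comp (C I * X)).natDegree ≤ P.natDegree * (C I * X).natDegree := natDegree_comp_le
      _ ≤ n₁ + n₂ := by
        rw [natDegree_C_mul_X _ I_ne_zero, mul_one]
        refine (natDegree_sub_le _ _).trans (max_le ?_ ?_) <;>
          refine natDegree_mul_le.trans ?_ <;>
          linarith [natDegree_pdag_le p₁, natDegree_pdag_le p₂]
      _ < ∑ i, k i := hsum
  have hP := eq_zero_of_vanishesToOrder hy hvanish hdeg
  rw [comp_C_mul_X_eq_zero_iff (mem_nonZeroDivisors_of_ne_zero I_ne_zero), sub_eq_zero] at hP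
  exact (RatFunc.mk_eq_mk hp₁ hp₂).2 hP

/-- If `r₁, r₂ ∈ 𝒰_n` have minimal degrees `n₁, n₂` and phase functions
`g₁, g₂`, and `g₁ − g₂` has at least `n₁ + n₂ + 1` zeros counting multiplicity, then
`r₁ = r₂`. -/
theorem phase_difference_zeros_imply_eq (n n₁ n₂ : ℕ) (r₁ r₂ : RatFunc ℂ)
    (h₁ : r₁ ∈ unitaryClass n₁) (h₁min : ∀ m : ℕ, r₁ ∈ unitaryClass m → n₁ ≤ m)
    (h₂ : r₂ ∈ unitaryClass n₂) (h₂min : ∀ m : ℕ, r₂ ∈ unitaryClass m → n₂ ≤ m)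
    (hn₁ : n₁ ≤ n) (hn₂ : n₂ ≤ n)
    (g₁ g₂ : ℝ → ℝ) (hg₁ : IsPhaseFun n r₁ g₁) (hg₂ : IsPhaseFun n r₂ g₂)
    (l : ℕ) (y : Fin l → ℝ) (k : Fin l → ℕ)
    (hy : Function.Injective y) (hk : ∀ i, 1 ≤ k i)
    (hsum : n₁ + n₂ + 1 ≤ ∑ i, k i)
    (hzero : ∀ i : Fin l, ∀ d : ℕ, d < k i →
      iteratedDeriv d (fun t => g₁ t - g₂ t) (y i) = 0) :
    r₁ = r₂ :=
  phase_difference_zeros_imply_eq_general n n₁ n₂ r₁ r₂ h₁ h₂ g₁ g₂ hg₁ hg₂ l y k hy hsum hzero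
end

section
/- Let n ∈ ℕ, ω ∈ (0, (n+1)π), and let r ∈ 𝒰_n be the unitary best approximation to e^{iωx}, with unique phase function g (max_{x∈[−1,1]} |g(x) − ωx| < π) and equioscillation points −1 = η_1 < ⋯ < η_{2n+2} = 1. Then the phase error attains a positive maximum at the first equioscillation point: g(η_j) − ωη_j = (−1)^{j+1} max_{x∈[−1,1]} |g(x) − ωx| for j = 1,…,2n+2; in particular g(−1) + ω = max_{x∈[−1,1]} |g(x) − ωx| > 0. -/
open Polynomial

/-
The phase error `f x = g x - ω x = θ + 2 ∑ⱼ arctan ((x - μⱼ) / ξⱼ) - ω x` has at most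
`2m + 1 ≤ 2n + 1` real zeros: by Rolle, `f' = 2 ∑ⱼ ξⱼ / ((x - μⱼ)² + ξⱼ²) - ω` vanishes between
consecutive zeros, and clearing denominators turns `f'` into a polynomial of degree exactly `2m`
(leading coefficient `-ω`). Hence the maximal error `E` is nonzero, since otherwise all `2n + 2`
equioscillation points would be zeros. If the alternation started with `f (-1) = -E`, then, as
`f x → +∞` for `x → -∞`, there would be one more sign change to the left of `-1`, and again
`2n + 2` zeros.
-/

open Polynomial Finset Filter Real

theorem strictMono_of_mem_Ioo_castSucc_succ {α : Type*} [Preorder α] {k : ℕ}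
    {y : Fin (k + 1) → α} (hy : Monotone y) {c : Fin k → α}
    (hc : ∀ i, c i ∈ Set.Ioo (y i.castSucc) (y i.succ)) : StrictMono c := by
  intro i j hij
  calc c i < y i.succ := (hc i).2
    _ ≤ y j.castSucc := hy (Fin.succ_le_castSucc_iff.2 hij)
    _ < c j := (hc j).1

theorem exists_strictMono_deriv_eq_zero {f f' : ℝ → ℝ} (hf : ∀ x, HasDerivAt f (f' x) x)
    {k : ℕ} {z : Fin (k + 1) → ℝ} (hz : StrictMono z) (hz0 : ∀ i, f (z i) = 0) :
    ∃ c : Fin k → ℝ, StrictMono c ∧ ∀ i, f' (c i) = 0 := by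
  have hfc : Continuous f := continuous_iff_continuousAt.2 fun x => (hf x).continuousAt
  choose c hc hc0 using fun i : Fin k =>
    exists_hasDerivAt_eq_zero (hz i.castSucc_lt_succ) hfc.continuousOn
      ((hz0 _).trans (hz0 _).symm) fun x _ => hf x
  exact ⟨c, strictMono_of_mem_Ioo_castSucc_succ hz.monotone hc, hc0⟩

theorem exists_strictMono_eq_zero_of_mul_neg {f : ℝ → ℝ} (hf : Continuous f) {k : ℕ}
    {y : Fin (k + 1) → ℝ} (hy : StrictMono y)
    (hsign : ∀ i : Fin k, f (y i.castSucc) * f (y i.succ) < 0) :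
    ∃ ζ : Fin k → ℝ, StrictMono ζ ∧ ∀ i, f (ζ i) = 0 := by
  have hzero : ∀ i : Fin k, ∃ x ∈ Set.Ioo (y i.castSucc) (y i.succ), f x = 0 := by
    intro i
    have hle := (hy i.castSucc_lt_succ).le
    rcases mul_neg_iff.1 (hsign i) with ⟨ha, hb⟩ | ⟨ha, hb⟩
    · exact intermediate_value_Ioo' hle hf.continuousOn ⟨hb, ha⟩
    · exact intermediate_value_Ioo hle hf.continuousOn ⟨ha, hb⟩
  choose ζ hζ hζ0 using hzero
  exact ⟨ζ, strictMono_of_mem_Ioo_castSucc_succ hy.monotone hζ, hζ0⟩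

section SumOfQuotients

noncomputable def quadFactor (μ ξ : ℝ) : ℝ[X] := (X - C μ) ^ 2 + C (ξ ^ 2)

theorem monic_quadFactor (μ ξ : ℝ) : (quadFactor μ ξ).Monic :=
  ((monic_X_sub_C μ).pow 2).add_of_left <| degree_C_le.trans_lt <| by
    rw [degree_pow, degree_X_sub_C]; decide

theorem natDegree_quadFactor (μ ξ : ℝ) : (quadFactor μ ξ).natDegree = 2 := by
  rw [quadFactor, natDegree_add_C, natDegree_pow, natDegree_X_sub_C]

theorem eval_quadFactor (μ ξ x : ℝ) : (quadFactor μ ξ).eval x = (x - μ) ^ 2 + ξ ^ 2 := by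
  simp [quadFactor]

variable {m : ℕ} (a μ ξ : Fin m → ℝ) (ω : ℝ)

noncomputable def sumQuotNumerator : ℝ[X] :=
  ∑ j, C (a j) * ∏ l ∈ univ.erase j, quadFactor (μ l) (ξ l) -
    C ω * ∏ j, quadFactor (μ j) (ξ j)

theorem eval_sumQuotNumerator (hξ : ∀ j, ξ j ≠ 0) (x : ℝ) :
    (sumQuotNumerator a μ ξ ω).eval x =
      (∑ j, a j / ((x - μ j) ^ 2 + ξ j ^ 2) - ω) * ∏ j, ((x - μ j) ^ 2 + ξ j ^ 2) := by
  have hpos : ∀ j, (x - μ j) ^ 2 + ξ j ^ 2 ≠ 0 := fun j => by have := hξ j; positivity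
  simp only [sumQuotNumerator, eval_sub, eval_mul, eval_C, eval_finsetSum, eval_prod,
    eval_quadFactor, sub_mul, Finset.sum_mul]
  congr 1
  refine Finset.sum_congr rfl fun j _ => ?_
  rw [← Finset.mul_prod_erase univ (fun l => (x - μ l) ^ 2 + ξ l ^ 2) (mem_univ j)]
  field_simp [hpos j]

theorem degree_sumQuotNumerator (hω : ω ≠ 0) :
    (sumQuotNumerator a μ ξ ω).degree = (2 * m : ℕ) := by
  have hprod : ∀ s : Finset (Fin m), (∏ l ∈ s, quadFactor (μ l) (ξ l)).natDegree = 2 * #s := by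
    intro s
    rw [natDegree_prod_of_monic _ _ fun l _ => monic_quadFactor _ _]
    simp [natDegree_quadFactor, mul_comm]
  have hlead : (C ω * ∏ j, quadFactor (μ j) (ξ j)).degree = (2 * m : ℕ) := by
    rw [degree_C_mul hω, degree_eq_natDegree (monic_prod_of_monic _ _
      fun l _ => monic_quadFactor _ _).ne_zero, hprod, card_univ, Fintype.card_fin]
  refine (degree_sub_eq_right_of_degree_lt ?_).trans hlead
  rw [hlead]
  refine (degree_sum_le _ _).trans_lt <| (Finset.sup_lt_iff (WithBot.bot_lt_coe _)).2 ?_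
  intro j _
  have hcard : #(univ.erase j) = m - 1 := by
    rw [card_erase_of_mem (mem_univ j), card_univ, Fintype.card_fin]
  have hle : (C (a j) * ∏ l ∈ univ.erase j, quadFactor (μ l) (ξ l)).natDegree ≤ 2 * (m - 1) :=
    (natDegree_C_mul_le _ _).trans_eq (by rw [hprod, hcard])
  have hlt : 2 * (m - 1) < 2 * m := by have := j.pos; omega
  exact degree_le_natDegree.trans_lt (WithBot.coe_lt_coe.2 (hle.trans_lt hlt))

theorem card_le_of_sum_div_eq (hξ : ∀ j, ξ j ≠ 0) (hω : ω ≠ 0) {k : ℕ} {c : Fin k → ℝ}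
    (hc : Function.Injective c) (h : ∀ i, ∑ j, a j / ((c i - μ j) ^ 2 + ξ j ^ 2) = ω) :
    k ≤ 2 * m := by
  have hdeg := degree_sumQuotNumerator a μ ξ ω hω
  have hne : sumQuotNumerator a μ ξ ω ≠ 0 := fun h0 => by
    rw [h0, degree_zero] at hdeg
    exact WithBot.bot_ne_coe hdeg
  calc k = #(univ.map ⟨c, hc⟩) := by simp
    _ ≤ (sumQuotNumerator a μ ξ ω).natDegree := by
      refine card_le_degree_of_subset_roots fun x hx => ?_
      rw [Finset.mem_val, Finset.mem_map] at hx
      obtain ⟨i, -, rfl⟩ := hx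
      rw [mem_roots hne, IsRoot, eval_sumQuotNumerator a μ ξ ω hξ]
      exact mul_eq_zero_of_left (sub_eq_zero.2 (h i)) _
    _ = 2 * m := natDegree_eq_of_degree_eq_some hdeg

end SumOfQuotients

theorem hasDerivAt_arctan_sub_div {μ ξ : ℝ} (hξ : ξ ≠ 0) (x : ℝ) :
    HasDerivAt (fun x => arctan ((x - μ) / ξ)) (ξ / ((x - μ) ^ 2 + ξ ^ 2)) x := by
  have hinner : HasDerivAt (fun x : ℝ => (x - μ) / ξ) (1 / ξ) x :=
    ((hasDerivAt_id x).sub_const μ).div_const ξ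
  refine ((hasDerivAt_arctan _).comp x hinner).congr_deriv ?_
  have : (x - μ) ^ 2 + ξ ^ 2 ≠ 0 := by positivity
  field_simp
  ring

section ArctanSum

variable {m : ℕ} (θ : ℝ) (μ ξ : Fin m → ℝ)

theorem hasDerivAt_arctanSum (hξ : ∀ j, ξ j ≠ 0) (x : ℝ) :
    HasDerivAt (fun x => θ + 2 * ∑ j, arctan ((x - μ j) / ξ j))
      (2 * ∑ j, ξ j / ((x - μ j) ^ 2 + ξ j ^ 2)) x :=
  ((HasDerivAt.fun_sum fun j _ => hasDerivAt_arctan_sub_div (hξ j) x).const_mul 2).const_add θ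

theorem sub_mul_pi_le_arctanSum (x : ℝ) :
    θ - m * π ≤ θ + 2 * ∑ j, arctan ((x - μ j) / ξ j) := by
  have : -(m * (π / 2)) ≤ ∑ j, arctan ((x - μ j) / ξ j) := by
    simpa using Finset.sum_le_sum fun j (_ : j ∈ univ) =>
      (neg_pi_div_two_lt_arctan ((x - μ j) / ξ j)).le
  linarith

theorem card_le_of_arctanSum_eq (hξ : ∀ j, ξ j ≠ 0) {ω : ℝ} (hω : ω ≠ 0) {k : ℕ}
    {z : Fin k → ℝ} (hz : StrictMono z)
    (h : ∀ i, θ + 2 * ∑ j, arctan ((z i - μ j) / ξ j) - ω * z i = 0) : k ≤ 2 * m + 1 := by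
  cases k with
  | zero => omega
  | succ k =>
    have hderiv := fun x => (hasDerivAt_arctanSum θ μ ξ hξ x).sub ((hasDerivAt_id x).const_mul ω)
    obtain ⟨c, hc, hc0⟩ := exists_strictMono_deriv_eq_zero hderiv hz h
    have := card_le_of_sum_div_eq ξ μ ξ (ω / 2) hξ (div_ne_zero hω two_ne_zero) hc.injective
      fun i => by simp only [mul_one] at hc0; linarith [hc0 i]
    omega

end ArctanSum

namespace IsPhaseFun

variable {n : ℕ} {r : RatFunc ℂ} {g : ℝ → ℝ}

theorem continuous_s15 (hg : IsPhaseFun n r g) : Continuous g := by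
  obtain ⟨m, θ, μ, ξ, -, hξ, -, hgform, -⟩ := hg
  obtain rfl := funext hgform
  exact continuous_iff_continuousAt.2 fun x => (hasDerivAt_arctanSum θ μ ξ hξ x).continuousAt

theorem tendsto_sub_mul_atBot (hg : IsPhaseFun n r g) {ω : ℝ} (hω : 0 < ω) :
    Tendsto (fun x => g x - ω * x) atBot atTop := by
  obtain ⟨m, θ, μ, ξ, -, -, -, hgform, -⟩ := hg
  simp only [sub_eq_add_neg, ← neg_mul]
  exact tendsto_atTop_add_left_of_le _ (θ - m * π)
    (fun x => (hgform x).symm ▸ sub_mul_pi_le_arctanSum θ μ ξ x)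
    (tendsto_id.const_mul_atBot_of_neg (neg_neg_of_pos hω))

theorem card_le_of_sub_mul_eq_zero (hg : IsPhaseFun n r g) {ω : ℝ} (hω : ω ≠ 0) {k : ℕ}
    {z : Fin k → ℝ} (hz : StrictMono z) (h : ∀ i, g (z i) - ω * z i = 0) : k ≤ 2 * n + 1 := by
  obtain ⟨m, θ, μ, ξ, hmn, hξ, -, hgform, -⟩ := hg
  have := card_le_of_arctanSum_eq θ μ ξ hξ hω hz fun i => hgform (z i) ▸ h i
  omega

theorem card_le_of_alternating_neg (hg : IsPhaseFun n r g) {ω : ℝ} (hω : 0 < ω) {E : ℝ}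
    (hE : 0 < E) {k : ℕ} {η : Fin (k + 1) → ℝ} (hη : StrictMono η)
    (hosc : ∀ j, g (η j) - ω * η j = -1 * (-1 : ℝ) ^ (j : ℕ) * E) : k + 1 ≤ 2 * n + 1 := by
  obtain ⟨x₀, hx₀, hx₀η⟩ := ((hg.tendsto_sub_mul_atBot hω).eventually_gt_atTop 0).and
    (eventually_lt_atBot (η 0)) |>.exists
  have hsign : ∀ i : Fin (k + 1),
      (g (Matrix.vecCons x₀ η i.castSucc) - ω * Matrix.vecCons x₀ η i.castSucc) *
        (g (Matrix.vecCons x₀ η i.succ) - ω * Matrix.vecCons x₀ η i.succ) < 0 := by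
    intro i
    cases i using Fin.cases with
    | zero => simpa [hosc] using mul_pos hx₀ hE
    | succ i =>
      have hpow : (-1 : ℝ) ^ (i : ℕ) * E * ((-1) ^ ((i : ℕ) + 1) * E) = -E ^ 2 := by
        rw [pow_succ]; ring_nf; simp
      simpa [hosc, hpow] using pow_pos hE 2
  obtain ⟨ζ, hζ, hζ0⟩ := exists_strictMono_eq_zero_of_mul_neg
    (hg.continuous_s15.sub (continuous_const_mul ω)) (strictMono_vecCons.2 ⟨hx₀η, hη⟩) hsign
  exact hg.card_le_of_sub_mul_eq_zero hω.ne' hζ hζ0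

end IsPhaseFun

theorem phase_error_max_at_first_point_general (n : ℕ) (ω : ℝ)
    (hω : 0 < ω)
    (r : RatFunc ℂ)
    (g : ℝ → ℝ) (hg : IsPhaseFun n r g)
    (η : Fin (2 * n + 1 + 1) → ℝ) (hη : StrictMono η)
    (hη0 : η 0 = -1)
    (halt : ∃ ε : ℝ, (ε = 1 ∨ ε = -1) ∧
      ∀ j : Fin (2 * n + 1 + 1),
        g (η j) - ω * η j = ε * (-1 : ℝ) ^ (j : ℕ) * phaseErrSup ω g) :
    (∀ j : Fin (2 * n + 1 + 1),
      g (η j) - ω * η j = (-1 : ℝ) ^ (j : ℕ) * phaseErrSup ω g) ∧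
    g (-1) + ω = phaseErrSup ω g ∧ 0 < phaseErrSup ω g := by
  set E := phaseErrSup ω g
  obtain ⟨ε, hε, hosc⟩ := halt
  have hE0 : 0 ≤ E := Real.sSup_nonneg <| by
    rintro _ ⟨x, -, rfl⟩
    exact abs_nonneg _
  have hE : 0 < E := hE0.lt_of_ne fun h0 => by
    have := hg.card_le_of_sub_mul_eq_zero hω.ne' hη fun j => by rw [hosc, ← h0, mul_zero]
    omega
  obtain rfl : ε = 1 := hε.resolve_right fun hε => by
    subst hε
    have := hg.card_le_of_alternating_neg hω hE hη hosc
    omega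
  have hosc1 : ∀ j, g (η j) - ω * η j = (-1 : ℝ) ^ (j : ℕ) * E := fun j => by
    simpa using hosc j
  refine ⟨hosc1, ?_, hE⟩
  have := hosc1 0
  rw [hη0, Fin.val_zero, pow_zero, one_mul] at this
  linarith

/-- The phase error of the unitary best approximation attains a (positive)
maximum at the first equioscillation point: with equioscillation points
`−1 = η₁ < ⋯ < η_{2n+2} = 1` one has
`g(η_j) − ω η_j = (−1)^{j+1} max_{x∈[−1,1]} |g(x) − ωx|` (zero-based: `(−1)^j`), and in
particular `g(−1) + ω = max |g − ωx| > 0`. -/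
theorem phase_error_max_at_first_point (n : ℕ) (ω : ℝ)
    (hω : 0 < ω) (hω' : ω < ((n : ℝ) + 1) * Real.pi)
    (r : RatFunc ℂ) (hr : r ∈ unitaryClass n)
    (hbest : ∀ u ∈ unitaryClass n, errNorm ω r ≤ errNorm ω u)
    (g : ℝ → ℝ) (hg : IsPhaseFun n r g) (hgb : phaseErrSup ω g < Real.pi)
    (η : Fin (2 * n + 1 + 1) → ℝ) (hη : StrictMono η)
    (hη0 : η 0 = -1) (hη1 : η (Fin.last (2 * n + 1)) = 1)
    (halt : ∃ ε : ℝ, (ε = 1 ∨ ε = -1) ∧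
      ∀ j : Fin (2 * n + 1 + 1),
        g (η j) - ω * η j = ε * (-1 : ℝ) ^ (j : ℕ) * phaseErrSup ω g) :
    (∀ j : Fin (2 * n + 1 + 1),
      g (η j) - ω * η j = (-1 : ℝ) ^ (j : ℕ) * phaseErrSup ω g) ∧
    g (-1) + ω = phaseErrSup ω g ∧ 0 < phaseErrSup ω g :=
  phase_error_max_at_first_point_general n ω hω r g hg η hη hη0 halt
end
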